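/- arXiv:2011.15064 — 5 statements merged into one kernel-verified Lean document; each statement's English description precedes it below -/
import Mathlib

section
/- Let F be a field, and let h₁, h₂ ∈ GL₂(F) be lower-triangular matrices with det h₁ = det h₂. There exists an upper-triangular matrix B ∈ GL₄(F) with ι(h₁,h₂)·u_B = u_B·B if and only if there is λ ∈ Fˣ with h₁ = h₂ = λ·1₂. (Equivalently: the stabiliser, in the lower-triangular Borel subgroup of H(F), of the coset u_B·B_G(F) in GSp₄(F)/B_G(F) is exactly H ∩ Z_G, the group of pairs of equal scalar matrices.) -/
open Matrix

/-- The standard antisymmetric matrix `J` defining `GSp₄`. -/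
def Jmat (R : Type*) [CommRing R] : Matrix (Fin 4) (Fin 4) R :=
  !![0, 0, 0, 1;
     0, 0, 1, 0;
     0, -1, 0, 0;
     -1, 0, 0, 0]

/-- The embedding `ι : GL₂ ×_{GL₁} GL₂ → GSp₄` on matrices. -/
def iota {R : Type*} [CommRing R] (h₁ h₂ : Matrix (Fin 2) (Fin 2) R) :
    Matrix (Fin 4) (Fin 4) R :=
  !![h₁ 0 0, 0, 0, h₁ 0 1;
     0, h₂ 0 0, h₂ 0 1, 0;
     0, h₂ 1 0, h₂ 1 1, 0;
     h₁ 1 0, 0, 0, h₁ 1 1]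

/-- The representative `u_B` of the open orbit of the lower Borel of `H` on `G/B_G`. -/
def uB (R : Type*) [CommRing R] : Matrix (Fin 4) (Fin 4) R :=
  !![1, 0, 0, 0;
     1, 1, 0, 0;
     0, 1, 1, 0;
     0, -1, -1, 1]

/-! Write `h₁ = [[a, 0], [c, d]]`, `h₂ = [[a', 0], [c', d']]` and `B` upper triangular.
Comparing the first column of `ι(h₁, h₂) u_B = u_B B` gives `(a, a', c', c) = (b₀₀, b₀₀, 0, 0)`,
and the second column gives `(0, a', c' + d', -d) = (b₀₁, b₀₁ + b₁₁, b₁₁, -b₁₁)`. Hence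
`c = c' = 0` and `a = a' = d = d'`, so both matrices are the same scalar. Conversely a scalar
`λ` gives `ι(λ, λ) = λ`, which commutes with `u_B`. -/

section

variable {R : Type*} [CommRing R]

theorem iota_smul_one (c : R) : iota (c • 1 : Matrix (Fin 2) (Fin 2) R) (c • 1) = c • 1 := by
  ext i j
  fin_cases i <;> fin_cases j <;> simp [iota]

theorem eq_smul_one_of_iota_mul_uB_eq {h₁ h₂ : Matrix (Fin 2) (Fin 2) R}
    {B : Matrix (Fin 4) (Fin 4) R}
    (hlow₁ : h₁ 0 1 = 0) (hlow₂ : h₂ 0 1 = 0) (hB : B.IsUpperTriangular)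
    (h : iota h₁ h₂ * uB R = uB R * B) :
    h₁ = h₁ 0 0 • 1 ∧ h₂ = h₁ 0 0 • 1 := by
  have hB' : ∀ i j : Fin 4, j < i → B i j = 0 := fun i j hij => hB hij
  have entry (i j : Fin 4) := congrFun (congrFun h i) j
  have e00 := entry 0 0
  have e10 := entry 1 0
  have e20 := entry 2 0
  have e30 := entry 3 0
  have e01 := entry 0 1
  have e11 := entry 1 1
  have e21 := entry 2 1
  have e31 := entry 3 1
  simp [iota, uB, mul_apply, Fin.sum_univ_four, hB'] at e00 e10 e20 e30 e01 e11 e21 e31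
  constructor <;> ext i j <;> fin_cases i <;> fin_cases j <;> simp <;> grind

end

theorem stabiliser_of_uB_coset_general (F : Type*) [Field F]
    (h₁ h₂ : Matrix (Fin 2) (Fin 2) F)
    (hlow₁ : h₁ 0 1 = 0) (hlow₂ : h₂ 0 1 = 0)
    (hu₁ : IsUnit h₁.det) :
    (∃ B : Matrix (Fin 4) (Fin 4) F, IsUnit B.det ∧
        (∀ i j : Fin 4, j < i → B i j = 0) ∧
        iota h₁ h₂ * uB F = uB F * B) ↔
      ∃ lam : Fˣ, h₁ = (lam : F) • (1 : Matrix (Fin 2) (Fin 2) F) ∧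
        h₂ = (lam : F) • (1 : Matrix (Fin 2) (Fin 2) F) := by
  constructor
  · rintro ⟨B, -, hB, h⟩
    obtain ⟨hh₁, hh₂⟩ := eq_smul_one_of_iota_mul_uB_eq hlow₁ hlow₂ (fun i j => hB i j) h
    have ha : IsUnit (h₁ 0 0) := by
      rw [hh₁, det_smul, det_one, mul_one, Fintype.card_fin, isUnit_pow_iff two_ne_zero] at hu₁
      exact hu₁
    exact ⟨ha.unit, hh₁, hh₂⟩
  · rintro ⟨lam, rfl, rfl⟩
    refine ⟨(lam : F) • 1, by simp, fun i j hij => by simp [one_apply, hij.ne'], ?_⟩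
    rw [iota_smul_one, smul_mul, Matrix.mul_smul, one_mul, mul_one]

theorem stabiliser_of_uB_coset (F : Type*) [Field F]
    (h₁ h₂ : Matrix (Fin 2) (Fin 2) F)
    (hlow₁ : h₁ 0 1 = 0) (hlow₂ : h₂ 0 1 = 0)
    (hu₁ : IsUnit h₁.det) (hu₂ : IsUnit h₂.det)
    (hdet : h₁.det = h₂.det) :
    (∃ B : Matrix (Fin 4) (Fin 4) F, IsUnit B.det ∧
        (∀ i j : Fin 4, j < i → B i j = 0) ∧
        iota h₁ h₂ * uB F = uB F * B) ↔
      ∃ lam : Fˣ, h₁ = (lam : F) • (1 : Matrix (Fin 2) (Fin 2) F) ∧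
        h₂ = (lam : F) • (1 : Matrix (Fin 2) (Fin 2) F) :=
  stabiliser_of_uB_coset_general F h₁ h₂ hlow₁ hlow₂ hu₁
end

section
/- Let F be a field and v ∈ F⁴. There exist h₁, h₂ ∈ SL₂(F) with ι(h₁,h₂)·v = (1,1,0,0)ᵀ if and only if (v₁,v₄) ≠ (0,0) and (v₂,v₃) ≠ (0,0). In particular, H(F) acts transitively on the set of lines F·v ⊂ F⁴ spanned by vectors v with (v₁,v₄) ≠ (0,0) and (v₂,v₃) ≠ (0,0): this set is the open H-orbit on the Klingen flag variety GSp₄/P_Kl ≅ ℙ³, and a point of ℙ³ represented by the first column of a matrix u lies in the open orbit precisely when that column is not of the form (0,∗,∗,0) or (∗,0,0,∗). -/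
/-!
`ι(h₁, h₂)` acts on the coordinate plane `(v₁, v₄)` through `h₁` and on the plane `(v₂, v₃)`
through `h₂`, independently. Both statements therefore reduce to the transitivity of `SL₂(F)`
on the nonzero vectors of `F²`.
-/

open Matrix

theorem iota_mulVec_eq_iff {R : Type*} [CommRing R] (h₁ h₂ : Matrix (Fin 2) (Fin 2) R)
    (v w : Fin 4 → R) :
    iota h₁ h₂ *ᵥ v = w ↔
      h₁ *ᵥ ![v 0, v 3] = ![w 0, w 3] ∧ h₂ *ᵥ ![v 1, v 2] = ![w 1, w 2] := by
  simp [funext_iff, Fin.forall_fin_succ, iota, dotProduct, Fin.sum_univ_four]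
  tauto

section SL2

variable {F : Type*} [Field F]

theorem exists_det_eq_one_mulVec_eq_vec10 {x : Fin 2 → F} (hx : x ≠ 0) :
    ∃ M : Matrix (Fin 2) (Fin 2) F, M.det = 1 ∧ M *ᵥ x = ![1, 0] := by
  by_cases h0 : x 0 = 0
  · have h1 : x 1 ≠ 0 := fun h1 => hx (by ext i; fin_cases i <;> simp [h0, h1])
    refine ⟨!![0, (x 1)⁻¹; -x 1, 0], by simp [det_fin_two_of, h1], ?_⟩
    ext i; fin_cases i <;> simp [mulVec_eq_sum, h0, h1]
  · refine ⟨!![(x 0)⁻¹, 0; -x 1, x 0], by simp [det_fin_two_of, h0], ?_⟩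
    ext i; fin_cases i <;> simp [mulVec_eq_sum, h0, mul_comm]

theorem exists_det_eq_one_mulVec_eq {x y : Fin 2 → F} (hx : x ≠ 0) (hy : y ≠ 0) :
    ∃ M : Matrix (Fin 2) (Fin 2) F, M.det = 1 ∧ M *ᵥ x = y := by
  obtain ⟨M, hM, hMx⟩ := exists_det_eq_one_mulVec_eq_vec10 hx
  obtain ⟨N, hN, hNy⟩ := exists_det_eq_one_mulVec_eq_vec10 hy
  refine ⟨N.adjugate * M, by simp [det_adjugate, hM, hN], ?_⟩
  rw [← mulVec_mulVec, hMx, ← hNy, mulVec_mulVec, adjugate_mul, hN, one_smul, one_mulVec]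

end SL2

/-- The open orbit of `H` on the Klingen flag variety `GSp₄/P_Kl ≅ ℙ³`: a vector `v` can be
moved to `(1,1,0,0)ᵀ` by `ι(SL₂ × SL₂)` iff `(v₁, v₄) ≠ (0,0)` and `(v₂, v₃) ≠ (0,0)`;
and `H(F)` acts transitively on lines spanned by such vectors. -/
theorem klingen_open_orbit (F : Type*) [Field F] :
    (∀ v : Fin 4 → F,
      (∃ h₁ h₂ : Matrix (Fin 2) (Fin 2) F, h₁.det = 1 ∧ h₂.det = 1 ∧
        (iota h₁ h₂).mulVec v = ![1, 1, 0, 0]) ↔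
      (¬(v 0 = 0 ∧ v 3 = 0) ∧ ¬(v 1 = 0 ∧ v 2 = 0))) ∧
    (∀ v v' : Fin 4 → F,
      ¬(v 0 = 0 ∧ v 3 = 0) → ¬(v 1 = 0 ∧ v 2 = 0) →
      ¬(v' 0 = 0 ∧ v' 3 = 0) → ¬(v' 1 = 0 ∧ v' 2 = 0) →
      ∃ h₁ h₂ : Matrix (Fin 2) (Fin 2) F, h₁.det = h₂.det ∧ IsUnit h₁.det ∧
        ∃ c : Fˣ, (iota h₁ h₂).mulVec v = (c : F) • v') := by
  have vec2_ne_zero {a b : F} : ![a, b] ≠ 0 ↔ ¬(a = 0 ∧ b = 0) := by simp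
  have e₁_ne_zero : ![(1 : F), 0] ≠ 0 := by simp
  refine ⟨fun v => ⟨?_, ?_⟩, ?_⟩
  · rintro ⟨h₁, h₂, -, -, hv⟩
    obtain ⟨hv₁, hv₂⟩ := (iota_mulVec_eq_iff h₁ h₂ v _).1 hv
    exact ⟨vec2_ne_zero.1 (ne_of_apply_ne (h₁ *ᵥ ·) (by simp [hv₁])),
      vec2_ne_zero.1 (ne_of_apply_ne (h₂ *ᵥ ·) (by simp [hv₂]))⟩
  · rintro ⟨h03, h12⟩
    obtain ⟨h₁, d₁, hv₁⟩ := exists_det_eq_one_mulVec_eq (vec2_ne_zero.2 h03) e₁_ne_zero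
    obtain ⟨h₂, d₂, hv₂⟩ := exists_det_eq_one_mulVec_eq (vec2_ne_zero.2 h12) e₁_ne_zero
    exact ⟨h₁, h₂, d₁, d₂, (iota_mulVec_eq_iff h₁ h₂ v _).2 ⟨hv₁, hv₂⟩⟩
  · intro v v' h03 h12 h03' h12'
    obtain ⟨h₁, d₁, hv₁⟩ := exists_det_eq_one_mulVec_eq (vec2_ne_zero.2 h03) (vec2_ne_zero.2 h03')
    obtain ⟨h₂, d₂, hv₂⟩ := exists_det_eq_one_mulVec_eq (vec2_ne_zero.2 h12) (vec2_ne_zero.2 h12')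
    refine ⟨h₁, h₂, d₁.trans d₂.symm, d₁ ▸ isUnit_one, 1, ?_⟩
    rw [Units.val_one, one_smul, iota_mulVec_eq_iff]
    exact ⟨hv₁, hv₂⟩
end

section
/- Assume (c₁,c₂) lies in region (f), i.e. c₁ + c₂ ≤ k₁ − k₂. Then for all j, k ∈ {0,1}: x₀ + yⱼ + zₖ ≤ w and x₁ + yⱼ + zₖ ≤ w, while x₂ + yⱼ + zₖ > w and x₃ + yⱼ + zₖ > w. In other words, the index triples contributing to the Euler factor E_p are exactly those with i ∈ {0,1}, corresponding to the eight Frobenius eigenvalues α𝔞₁𝔞₂, α𝔞₁𝔟₂, α𝔟₁𝔞₂, α𝔟₁𝔟₂, β𝔞₁𝔞₂, β𝔞₁𝔟₂, β𝔟₁𝔞₂, β𝔟₁𝔟₂ appearing in the displayed formula for E_p^{(f)}. -/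
/-- Valuations of the Hecke parameters `(α, β, γ, δ)` of a `p`-ordinary representation of
`GSp₄` of weight `(k₁, k₂)`. -/
def xval (k₁ k₂ : ℤ) : Fin 4 → ℤ := ![0, k₂ - 2, k₁ - 1, k₁ + k₂ - 3]

/-- Valuations of the Hecke parameters `(𝔞, 𝔟)` of a `p`-ordinary eigenform of weight `c`. -/
def yval (c : ℤ) : Fin 2 → ℤ := ![0, c - 1]

theorem yval_mem_Icc {c : ℤ} (hc : 1 ≤ c) (j : Fin 2) : yval c j ∈ Set.Icc 0 (c - 1) := by
  fin_cases j <;> simp [yval, hc]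

theorem euler_factor_region_f_general (k₁ k₂ c₁ c₂ w : ℤ)
    (hk₂ : 2 ≤ k₂) (hc₁ : 1 ≤ c₁) (hc₂ : 1 ≤ c₂)
    (hw : 2 * w = k₁ + k₂ + c₁ + c₂ - 6)
    (hreg : c₁ + c₂ ≤ k₁ - k₂) :
    ∀ j k : Fin 2,
      xval k₁ k₂ 0 + yval c₁ j + yval c₂ k ≤ w ∧
      xval k₁ k₂ 1 + yval c₁ j + yval c₂ k ≤ w ∧
      w < xval k₁ k₂ 2 + yval c₁ j + yval c₂ k ∧
      w < xval k₁ k₂ 3 + yval c₁ j + yval c₂ k := by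
  intro j k
  obtain ⟨hj₀, hj₁⟩ := yval_mem_Icc hc₁ j
  obtain ⟨hk₀, hk₁⟩ := yval_mem_Icc hc₂ k
  -- `yⱼ + zₖ` ranges over `[0, c₁ + c₂ - 2]`, and `x₀ ≤ x₁ < x₂ ≤ x₃`, so only these two
  -- extreme cases need the region hypothesis.
  have hβ_max : k₂ - 2 + (c₁ - 1) + (c₂ - 1) ≤ w := by omega
  have hγ_min : w < k₁ - 1 := by omega
  simp only [xval, Matrix.cons_val_zero, Matrix.cons_val]
  omega

/-- In region (f), i.e. `c₁ + c₂ ≤ k₁ - k₂`, the index triples `(i,j,k)` contributing to the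
Euler factor `E_p` (i.e. with `xᵢ + yⱼ + zₖ ≤ w`) are exactly those with `i ∈ {0,1}`. -/
theorem euler_factor_region_f (k₁ k₂ c₁ c₂ w : ℤ)
    (hk₂ : 2 ≤ k₂) (hk : k₂ ≤ k₁) (hc₁ : 1 ≤ c₁) (hc₂ : 1 ≤ c₂)
    (hw : 2 * w = k₁ + k₂ + c₁ + c₂ - 6)
    (hreg : c₁ + c₂ ≤ k₁ - k₂) :
    ∀ j k : Fin 2,
      xval k₁ k₂ 0 + yval c₁ j + yval c₂ k ≤ w ∧
      xval k₁ k₂ 1 + yval c₁ j + yval c₂ k ≤ w ∧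
      w < xval k₁ k₂ 2 + yval c₁ j + yval c₂ k ∧
      w < xval k₁ k₂ 3 + yval c₁ j + yval c₂ k :=
  euler_factor_region_f_general k₁ k₂ c₁ c₂ w hk₂ hc₁ hc₂ hw hreg
end

section
/- Assume (c₁,c₂) lies in region (e), i.e. k₁ − k₂ + 4 ≤ c₁ + c₂ ≤ k₁ + k₂ − 2 and |c₁ − c₂| ≤ k₁ − k₂. Then: x₀ + yⱼ + zₖ ≤ w for all (j,k); x₁ + yⱼ + zₖ ≤ w if and only if (j,k) ≠ (1,1); x₂ + yⱼ + zₖ ≤ w if and only if (j,k) = (0,0); and x₃ + yⱼ + zₖ > w for all (j,k). Hence exactly eight index triples contribute to E_p, namely the four with i = 0 (the eigenvalues α𝔞₁𝔞₂, α𝔞₁𝔟₂, α𝔟₁𝔞₂, α𝔟₁𝔟₂), the three with i = 1 and (j,k) ≠ (1,1) (β𝔞₁𝔞₂, β𝔞₁𝔟₂, β𝔟₁𝔞₂), and (i,j,k) = (2,0,0) (γ𝔞₁𝔞₂), as in the region (e) row of the paper's table of Frobenius eigenvalues. -/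
/-!
After doubling, each condition `xᵢ + yⱼ + zₖ ≤ w` is a linear inequality in `k₁, k₂, c₁, c₂`,
and the inequalities cutting out region (e) decide the boundary cases: `k₁ - k₂ + 4 ≤ c₁ + c₂`
admits `(2,0,0)` and excludes `(1,1,1)`, `c₁ + c₂ ≤ k₁ + k₂ - 2` admits `(0,1,1)` and excludes
`(3,0,0)`, and `|c₁ - c₂| ≤ k₁ - k₂` admits `(1,1,0)`, `(1,0,1)` and excludes `(2,1,0)`,
`(2,0,1)`. The other triples follow by monotonicity in `i`, `j`, `k`, since region (e) forces
`k₁ ≥ k₂ ≥ 3` and `c₁, c₂ ≥ 2`.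
-/

@[simp] lemma xval_zero (k₁ k₂ : ℤ) : xval k₁ k₂ 0 = 0 := rfl
@[simp] lemma xval_one (k₁ k₂ : ℤ) : xval k₁ k₂ 1 = k₂ - 2 := rfl
@[simp] lemma xval_two (k₁ k₂ : ℤ) : xval k₁ k₂ 2 = k₁ - 1 := rfl
@[simp] lemma xval_three (k₁ k₂ : ℤ) : xval k₁ k₂ 3 = k₁ + k₂ - 3 := rfl
@[simp] lemma yval_zero (c : ℤ) : yval c 0 = 0 := rfl
@[simp] lemma yval_one (c : ℤ) : yval c 1 = c - 1 := rfl

def Contributes (k₁ k₂ c₁ c₂ w : ℤ) (i : Fin 4) (j k : Fin 2) : Prop :=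
  xval k₁ k₂ i + yval c₁ j + yval c₂ k ≤ w

structure RegionE (k₁ k₂ c₁ c₂ : ℤ) : Prop where
  lower : k₁ - k₂ + 4 ≤ c₁ + c₂
  upper : c₁ + c₂ ≤ k₁ + k₂ - 2
  abs_sub_le : |c₁ - c₂| ≤ k₁ - k₂

namespace RegionE

variable {k₁ k₂ c₁ c₂ w : ℤ}

theorem contributes_zero (h : RegionE k₁ k₂ c₁ c₂) (hw : 2 * w = k₁ + k₂ + c₁ + c₂ - 6)
    (j k : Fin 2) : Contributes k₁ k₂ c₁ c₂ w 0 j k := by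
  have := h.lower; have := h.upper; have := abs_le.1 h.abs_sub_le
  fin_cases j <;> fin_cases k <;> simp [Contributes] <;> omega

theorem contributes_one_iff (h : RegionE k₁ k₂ c₁ c₂) (hw : 2 * w = k₁ + k₂ + c₁ + c₂ - 6)
    (j k : Fin 2) : Contributes k₁ k₂ c₁ c₂ w 1 j k ↔ ¬(j = 1 ∧ k = 1) := by
  have := h.lower; have := abs_le.1 h.abs_sub_le
  fin_cases j <;> fin_cases k <;> simp [Contributes] <;> omega

theorem contributes_two_iff (h : RegionE k₁ k₂ c₁ c₂) (hw : 2 * w = k₁ + k₂ + c₁ + c₂ - 6)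
    (j k : Fin 2) : Contributes k₁ k₂ c₁ c₂ w 2 j k ↔ j = 0 ∧ k = 0 := by
  have := h.lower; have := abs_le.1 h.abs_sub_le
  fin_cases j <;> fin_cases k <;> simp [Contributes] <;> omega

theorem not_contributes_three (h : RegionE k₁ k₂ c₁ c₂) (hw : 2 * w = k₁ + k₂ + c₁ + c₂ - 6)
    (j k : Fin 2) : ¬Contributes k₁ k₂ c₁ c₂ w 3 j k := by
  have := h.lower; have := h.upper; have := abs_le.1 h.abs_sub_le
  fin_cases j <;> fin_cases k <;> simp [Contributes] <;> omega

end RegionE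

theorem euler_factor_region_e_general (k₁ k₂ c₁ c₂ w : ℤ)
    (hw : 2 * w = k₁ + k₂ + c₁ + c₂ - 6)
    (hreg₁ : k₁ - k₂ + 4 ≤ c₁ + c₂) (hreg₂ : c₁ + c₂ ≤ k₁ + k₂ - 2)
    (hreg₃ : |c₁ - c₂| ≤ k₁ - k₂) :
    ∀ j k : Fin 2,
      (xval k₁ k₂ 0 + yval c₁ j + yval c₂ k ≤ w) ∧
      (xval k₁ k₂ 1 + yval c₁ j + yval c₂ k ≤ w ↔ ¬(j = 1 ∧ k = 1)) ∧
      (xval k₁ k₂ 2 + yval c₁ j + yval c₂ k ≤ w ↔ (j = 0 ∧ k = 0)) ∧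
      ¬(xval k₁ k₂ 3 + yval c₁ j + yval c₂ k ≤ w) := by
  have h : RegionE k₁ k₂ c₁ c₂ := ⟨hreg₁, hreg₂, hreg₃⟩
  intro j k
  exact ⟨h.contributes_zero hw j k, h.contributes_one_iff hw j k,
    h.contributes_two_iff hw j k, h.not_contributes_three hw j k⟩

/-- In region (e), i.e. `k₁ - k₂ + 4 ≤ c₁ + c₂ ≤ k₁ + k₂ - 2` and `|c₁ - c₂| ≤ k₁ - k₂`,
the index triples contributing to the Euler factor `E_p` are exactly the eight listed in the
region (e) row of the paper's table. -/
theorem euler_factor_region_e (k₁ k₂ c₁ c₂ w : ℤ)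
    (hk₂ : 2 ≤ k₂) (hk : k₂ ≤ k₁) (hc₁ : 1 ≤ c₁) (hc₂ : 1 ≤ c₂)
    (hw : 2 * w = k₁ + k₂ + c₁ + c₂ - 6)
    (hreg₁ : k₁ - k₂ + 4 ≤ c₁ + c₂) (hreg₂ : c₁ + c₂ ≤ k₁ + k₂ - 2)
    (hreg₃ : |c₁ - c₂| ≤ k₁ - k₂) :
    ∀ j k : Fin 2,
      (xval k₁ k₂ 0 + yval c₁ j + yval c₂ k ≤ w) ∧
      (xval k₁ k₂ 1 + yval c₁ j + yval c₂ k ≤ w ↔ ¬(j = 1 ∧ k = 1)) ∧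
      (xval k₁ k₂ 2 + yval c₁ j + yval c₂ k ≤ w ↔ (j = 0 ∧ k = 0)) ∧
      ¬(xval k₁ k₂ 3 + yval c₁ j + yval c₂ k ≤ w) :=
  euler_factor_region_e_general k₁ k₂ c₁ c₂ w hw hreg₁ hreg₂ hreg₃
end

section
/- Assume (c₁,c₂) lies in region (c), i.e. c₁ + c₂ ≥ k₁ + k₂ and |c₁ − c₂| ≤ k₁ − k₂. Then for i ∈ {0,1}: xᵢ + yⱼ + zₖ ≤ w if and only if (j,k) ≠ (1,1); and for i ∈ {2,3}: xᵢ + yⱼ + zₖ ≤ w if and only if (j,k) = (0,0). Hence exactly eight index triples contribute to E_p, matching the region (c) row of the paper's table of Frobenius eigenvalues. -/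
section RegionC

variable {k₁ k₂ c₁ c₂ w : ℤ} {i : Fin 4}

theorem xval_add_yval_add_yval_le_iff_of_eq_zero_or_eq_one (hk₂ : 2 ≤ k₂)
    (hw : 2 * w = k₁ + k₂ + c₁ + c₂ - 6) (hreg₁ : k₁ + k₂ ≤ c₁ + c₂)
    (hreg₂ : |c₁ - c₂| ≤ k₁ - k₂) (hi : i = 0 ∨ i = 1) (j k : Fin 2) :
    xval k₁ k₂ i + yval c₁ j + yval c₂ k ≤ w ↔ ¬(j = 1 ∧ k = 1) := by
  rw [abs_le] at hreg₂
  revert j k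
  rcases hi with rfl | rfl <;>
    simp only [Fin.forall_fin_two, xval, yval, Matrix.cons_val_zero, Matrix.cons_val_one,
      Matrix.cons_val_fin_one, Fin.isValue, zero_ne_one, and_true, and_false, not_true_eq_false,
      not_false_eq_true, iff_true, iff_false, not_le] <;>
    omega

theorem xval_add_yval_add_yval_le_iff_of_eq_two_or_eq_three (hk₂ : 2 ≤ k₂)
    (hw : 2 * w = k₁ + k₂ + c₁ + c₂ - 6) (hreg₁ : k₁ + k₂ ≤ c₁ + c₂)
    (hreg₂ : |c₁ - c₂| ≤ k₁ - k₂) (hi : i = 2 ∨ i = 3) (j k : Fin 2) :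
    xval k₁ k₂ i + yval c₁ j + yval c₂ k ≤ w ↔ j = 0 ∧ k = 0 := by
  rw [abs_le] at hreg₂
  revert j k
  rcases hi with rfl | rfl <;>
    simp only [Fin.forall_fin_two, xval, yval, Matrix.cons_val, Matrix.cons_val_zero,
      Matrix.cons_val_one, Matrix.cons_val_fin_one, Fin.isValue, one_ne_zero, and_true,
      and_false, iff_true, iff_false, not_le] <;>
    omega

end RegionC

theorem euler_factor_region_c_general (k₁ k₂ c₁ c₂ w : ℤ)
    (hk₂ : 2 ≤ k₂)
    (hw : 2 * w = k₁ + k₂ + c₁ + c₂ - 6)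
    (hreg₁ : k₁ + k₂ ≤ c₁ + c₂) (hreg₂ : |c₁ - c₂| ≤ k₁ - k₂) :
    ∀ j k : Fin 2,
      (xval k₁ k₂ 0 + yval c₁ j + yval c₂ k ≤ w ↔ ¬(j = 1 ∧ k = 1)) ∧
      (xval k₁ k₂ 1 + yval c₁ j + yval c₂ k ≤ w ↔ ¬(j = 1 ∧ k = 1)) ∧
      (xval k₁ k₂ 2 + yval c₁ j + yval c₂ k ≤ w ↔ (j = 0 ∧ k = 0)) ∧
      (xval k₁ k₂ 3 + yval c₁ j + yval c₂ k ≤ w ↔ (j = 0 ∧ k = 0)) := fun j k =>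
  ⟨xval_add_yval_add_yval_le_iff_of_eq_zero_or_eq_one hk₂ hw hreg₁ hreg₂ (.inl rfl) j k,
    xval_add_yval_add_yval_le_iff_of_eq_zero_or_eq_one hk₂ hw hreg₁ hreg₂ (.inr rfl) j k,
    xval_add_yval_add_yval_le_iff_of_eq_two_or_eq_three hk₂ hw hreg₁ hreg₂ (.inl rfl) j k,
    xval_add_yval_add_yval_le_iff_of_eq_two_or_eq_three hk₂ hw hreg₁ hreg₂ (.inr rfl) j k⟩

/-- In region (c), i.e. `c₁ + c₂ ≥ k₁ + k₂` and `|c₁ - c₂| ≤ k₁ - k₂`, the index triples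
contributing to the Euler factor `E_p`: for `i ∈ {0,1}` exactly those with `(j,k) ≠ (1,1)`,
and for `i ∈ {2,3}` exactly `(j,k) = (0,0)`. -/
theorem euler_factor_region_c (k₁ k₂ c₁ c₂ w : ℤ)
    (hk₂ : 2 ≤ k₂) (hk : k₂ ≤ k₁) (hc₁ : 1 ≤ c₁) (hc₂ : 1 ≤ c₂)
    (hw : 2 * w = k₁ + k₂ + c₁ + c₂ - 6)
    (hreg₁ : k₁ + k₂ ≤ c₁ + c₂) (hreg₂ : |c₁ - c₂| ≤ k₁ - k₂) :
    ∀ j k : Fin 2,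
      (xval k₁ k₂ 0 + yval c₁ j + yval c₂ k ≤ w ↔ ¬(j = 1 ∧ k = 1)) ∧
      (xval k₁ k₂ 1 + yval c₁ j + yval c₂ k ≤ w ↔ ¬(j = 1 ∧ k = 1)) ∧
      (xval k₁ k₂ 2 + yval c₁ j + yval c₂ k ≤ w ↔ (j = 0 ∧ k = 0)) ∧
      (xval k₁ k₂ 3 + yval c₁ j + yval c₂ k ≤ w ↔ (j = 0 ∧ k = 0)) :=
  euler_factor_region_c_general k₁ k₂ c₁ c₂ w hk₂ hw hreg₁ hreg₂
end
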